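/- Under the hypotheses of the previous kernel estimate (x ∈ I_N(x_k e_k + x_l e_l), 0 ≤ k < l ≤ N−1), for n ≥ 2^N one has ∫_{I_N} |K_n(x − t)| dμ(t) ≤ c · 2^l · 2^k / (n · 2^N) for an absolute constant c. -/

import Mathlib

/-!
Fix `y` with `y_k = y_l = 1`, `k < l`. Since `w_{2^s u + r} = w_{2^s u} w_r` for `r < 2^s` and
`w_{2^k}(y) = -1`, the Dirichlet kernels vanish at multiples of `2^(k+1)`, hence
`D_{2^s u + r}(y) = ± D_r(y)` for `s > k`, `r ≤ 2^s`, and `|D_m(y)| ≤ 2^(k+1)`. In the block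
`r < 2^(l+1)` the second half of the `D_r(y)` is the negative of the first (`w_{2^l}(y) = -1`), so
`∑_{r < 2^(l+1)} D_r(y) = 0`; therefore `|n K_n(y)| ≤ 2^(l+1) · 2^(k+1)`. This applies to
`y = x - t` for every `t ∈ I_N`, and `μ(I_N) = 2^(-N)` because the `2^N` translates of `I_N` by
the patterns of the first `N` coordinates partition `G`; this gives the bound with `c = 4`.
-/

open Finset

/-- The dyadic group `G = (ℤ/2)^ℕ`. -/
abbrev G := ℕ → ZMod 2

/-- Walsh–Paley functions: `w n x = ∏ k, ((-1)^(x k))^(n_k)` for the binary expansion of `n`. -/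
noncomputable def walsh (n : ℕ) (x : G) : ℝ :=
  ∏ k ∈ Finset.range (n + 1), if n.testBit k then (-1 : ℝ) ^ (x k).val else 1

/-- Walsh–Dirichlet kernels `D m = ∑_{k<m} w k`. -/
noncomputable def dirichlet (m : ℕ) (x : G) : ℝ :=
  ∑ k ∈ Finset.range m, walsh k x

/-- Walsh–Fejér kernels `K n = (1/n) ∑_{k<n} D k`. -/
noncomputable def fejer (n : ℕ) (x : G) : ℝ :=
  (1 / (n : ℝ)) * ∑ k ∈ Finset.range n, dirichlet k x

/-- The cylinder set `I_N = {t : t_0 = ⋯ = t_{N-1} = 0}`. -/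
def IN (N : ℕ) : Set G := {t | ∀ j < N, t j = 0}

open MeasureTheory

instance : TopologicalSpace (ZMod 2) := ⊥
instance : DiscreteTopology (ZMod 2) := ⟨rfl⟩
instance : MeasurableSpace G := borel G
instance : BorelSpace G := ⟨rfl⟩

/-- The normalized Haar measure on the compact group `G`. -/
noncomputable def haarG : Measure G :=
  Measure.addHaarMeasure ⟨⟨Set.univ, isCompact_univ⟩, by simp⟩

lemma walsh_eq_prod_range {n M : ℕ} (h : n < M) (x : G) :
    walsh n x = ∏ k ∈ range M, if n.testBit k then (-1 : ℝ) ^ (x k).val else 1 := by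
  refine prod_subset (range_subset_range.2 h) fun i _ hi => ?_
  have hn : n < 2 ^ i := Nat.lt_two_pow_self.trans_le
    (Nat.pow_le_pow_right two_pos (by simp only [mem_range, not_lt] at hi; omega))
  simp [Nat.testBit_lt_two_pow hn]

lemma abs_walsh_le_one (n : ℕ) (x : G) : |walsh n x| ≤ 1 := by
  rw [walsh, abs_prod]
  refine prod_le_one (fun _ _ => abs_nonneg _) fun i _ => ?_
  split_ifs <;> simp

lemma walsh_two_pow (s : ℕ) (x : G) : walsh (2 ^ s) x = (-1 : ℝ) ^ (x s).val := by
  rw [walsh, prod_eq_single s]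
  · simp [Nat.testBit_two_pow_self]
  · intro i _ hi
    simp [Nat.testBit_two_pow_of_ne (Ne.symm hi)]
  · exact fun h => absurd (mem_range.2 (Nat.lt_two_pow_self.trans (Nat.lt_succ_self _))) h

lemma walsh_two_pow_mul_add {s u r : ℕ} (hr : r < 2 ^ s) (x : G) :
    walsh (2 ^ s * u + r) x = walsh (2 ^ s * u) x * walsh r x := by
  have hM : ∀ m ≤ 2 ^ s * u + r, m < 2 ^ s * u + r + 1 := fun _ hm => Nat.lt_succ_of_le hm
  rw [walsh_eq_prod_range (hM _ le_rfl), walsh_eq_prod_range (hM _ (Nat.le_add_right _ _)),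
    walsh_eq_prod_range (hM _ (Nat.le_add_left _ _)), ← prod_mul_distrib]
  refine prod_congr rfl fun i _ => ?_
  rw [Nat.testBit_two_pow_mul_add u hr, Nat.testBit_two_pow_mul]
  by_cases hi : i < s
  · simp [hi, hi.not_ge]
  · have hr' : r < 2 ^ i := hr.trans_le (Nat.pow_le_pow_right two_pos (not_lt.1 hi))
    simp [hi, not_lt.1 hi, Nat.testBit_lt_two_pow hr']

lemma walsh_two_pow_of_eq_one {x : G} {s : ℕ} (hs : x s = 1) : walsh (2 ^ s) x = -1 := by
  simp [walsh_two_pow, hs, ZMod.val_one]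

lemma dirichlet_two_pow_mul_add {s : ℕ} (u : ℕ) {r : ℕ} (hr : r ≤ 2 ^ s) (x : G) :
    dirichlet (2 ^ s * u + r) x = dirichlet (2 ^ s * u) x + walsh (2 ^ s * u) x * dirichlet r x := by
  rw [dirichlet, sum_range_add, dirichlet, dirichlet, mul_sum]
  congr 1
  exact sum_congr rfl fun j hj => walsh_two_pow_mul_add ((mem_range.1 hj).trans_le hr) x

lemma dirichlet_two_pow_succ_eq_zero {x : G} {k : ℕ} (hk : x k = 1) :
    dirichlet (2 ^ (k + 1)) x = 0 := by
  rw [show 2 ^ (k + 1) = 2 ^ k * 1 + 2 ^ k by ring, dirichlet_two_pow_mul_add 1 le_rfl, mul_one,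
    walsh_two_pow_of_eq_one hk]
  ring

lemma dirichlet_eq_zero_of_two_pow_succ_dvd {x : G} {k m : ℕ} (hk : x k = 1)
    (hm : 2 ^ (k + 1) ∣ m) : dirichlet m x = 0 := by
  obtain ⟨u, rfl⟩ := hm
  induction u with
  | zero => simp [dirichlet]
  | succ u ih =>
    have hstep := dirichlet_two_pow_mul_add u (le_refl (2 ^ (k + 1))) x
    rw [← mul_add_one] at hstep
    rw [hstep, ih, dirichlet_two_pow_succ_eq_zero hk, mul_zero, add_zero]

lemma dirichlet_two_pow_mul_add_of_lt {x : G} {k s : ℕ} (hk : x k = 1) (hks : k < s) (u : ℕ)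
    {r : ℕ} (hr : r ≤ 2 ^ s) :
    dirichlet (2 ^ s * u + r) x = walsh (2 ^ s * u) x * dirichlet r x := by
  rw [dirichlet_two_pow_mul_add u hr, dirichlet_eq_zero_of_two_pow_succ_dvd hk
    ((pow_dvd_pow 2 hks).mul_right u), zero_add]

lemma abs_dirichlet_le_self (r : ℕ) (x : G) : |dirichlet r x| ≤ r := by
  refine (abs_sum_le_sum_abs _ _).trans ?_
  simpa using sum_le_sum fun j (_ : j ∈ range r) => abs_walsh_le_one j x

lemma abs_dirichlet_le_two_pow {x : G} {k : ℕ} (hk : x k = 1) (m : ℕ) :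
    |dirichlet m x| ≤ 2 ^ (k + 1) := by
  rw [← Nat.div_add_mod m (2 ^ (k + 1)), dirichlet_two_pow_mul_add_of_lt hk (Nat.lt_succ_self k) _
    (Nat.mod_lt _ (by positivity)).le, abs_mul]
  calc |walsh _ x| * |dirichlet (m % 2 ^ (k + 1)) x| ≤ 1 * (m % 2 ^ (k + 1) : ℕ) :=
        mul_le_mul (abs_walsh_le_one _ _) (abs_dirichlet_le_self _ _) (abs_nonneg _) zero_le_one
    _ ≤ 2 ^ (k + 1) := by
        rw [one_mul]; exact_mod_cast (Nat.mod_lt _ (by positivity)).le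

lemma sum_range_dirichlet_two_pow_succ_eq_zero {x : G} {k l : ℕ} (hkl : k < l) (hk : x k = 1)
    (hl : x l = 1) : ∑ r ∈ range (2 ^ (l + 1)), dirichlet r x = 0 := by
  have hshift : ∀ r ∈ range (2 ^ l), dirichlet (2 ^ l + r) x = -dirichlet r x := fun r hr => by
    simpa [walsh_two_pow_of_eq_one hl] using
      dirichlet_two_pow_mul_add_of_lt hk hkl 1 (mem_range.1 hr).le
  rw [pow_succ, mul_two, sum_range_add, sum_congr rfl hshift,
    sum_neg_distrib, add_neg_cancel]

lemma sum_range_dirichlet_two_pow_succ_mul_eq_zero {x : G} {k l : ℕ} (hkl : k < l)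
    (hk : x k = 1) (hl : x l = 1) (u : ℕ) :
    ∑ r ∈ range (2 ^ (l + 1) * u), dirichlet r x = 0 := by
  induction u with
  | zero => simp
  | succ u ih =>
    have hshift : ∀ r ∈ range (2 ^ (l + 1)),
        dirichlet (2 ^ (l + 1) * u + r) x = walsh (2 ^ (l + 1) * u) x * dirichlet r x :=
      fun r hr => dirichlet_two_pow_mul_add_of_lt hk (hkl.trans l.lt_succ_self) u (mem_range.1 hr).le
    rw [mul_add_one, sum_range_add, ih, sum_congr rfl hshift, ← mul_sum,
      sum_range_dirichlet_two_pow_succ_eq_zero hkl hk hl, mul_zero, add_zero]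

lemma abs_sum_range_dirichlet_le {x : G} {k : ℕ} (hk : x k = 1) (m : ℕ) :
    |∑ r ∈ range m, dirichlet r x| ≤ m * 2 ^ (k + 1) := by
  refine (abs_sum_le_sum_abs _ _).trans ?_
  simpa using sum_le_sum fun r (_ : r ∈ range m) => abs_dirichlet_le_two_pow hk r

lemma abs_sum_range_dirichlet_le_two_pow_mul {x : G} {k l : ℕ} (hkl : k < l) (hk : x k = 1)
    (hl : x l = 1) (n : ℕ) :
    |∑ r ∈ range n, dirichlet r x| ≤ 2 ^ (l + 1) * 2 ^ (k + 1) := by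
  set q := 2 ^ (l + 1)
  have hq : 0 < q := by positivity
  have hshift : ∀ r ∈ range (n % q),
      dirichlet (q * (n / q) + r) x = walsh (q * (n / q)) x * dirichlet r x := fun r hr =>
    dirichlet_two_pow_mul_add_of_lt hk (hkl.trans l.lt_succ_self) _
      ((mem_range.1 hr).trans (Nat.mod_lt n hq)).le
  rw [← Nat.div_add_mod n q, sum_range_add, sum_range_dirichlet_two_pow_succ_mul_eq_zero hkl hk hl,
    zero_add, sum_congr rfl hshift, ← mul_sum, abs_mul]
  calc |walsh (q * (n / q)) x| * |∑ r ∈ range (n % q), dirichlet r x|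
      ≤ 1 * ((n % q : ℕ) * 2 ^ (k + 1)) :=
        mul_le_mul (abs_walsh_le_one _ _) (abs_sum_range_dirichlet_le hk _) (abs_nonneg _) zero_le_one
    _ ≤ 2 ^ (l + 1) * 2 ^ (k + 1) := by
        rw [one_mul]
        gcongr
        exact_mod_cast (Nat.mod_lt n hq).le

lemma abs_fejer_le {x : G} {k l : ℕ} (hkl : k < l) (hk : x k = 1) (hl : x l = 1) (n : ℕ) :
    |fejer n x| ≤ 2 ^ (l + 1) * 2 ^ (k + 1) / n := by
  rw [fejer, abs_mul, one_div, abs_inv, Nat.abs_cast, inv_mul_eq_div]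
  exact div_le_div_of_nonneg_right (abs_sum_range_dirichlet_le_two_pow_mul hkl hk hl n) n.cast_nonneg

instance : IsProbabilityMeasure haarG := by
  constructor
  simpa [haarG] using Measure.addHaarMeasure_self
    (K₀ := (⟨⟨Set.univ, isCompact_univ⟩, by simp⟩ : TopologicalSpace.PositiveCompacts G))

instance : haarG.IsAddLeftInvariant := by
  unfold haarG; infer_instance

def restrictFin (N : ℕ) (t : G) : Fin N → ZMod 2 := fun i => t i

lemma IN_eq_preimage_restrictFin (N : ℕ) : IN N = restrictFin N ⁻¹' {0} := by
  ext t
  simp [IN, restrictFin, funext_iff, Fin.forall_iff]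

lemma haarG_preimage_restrictFin (N : ℕ) (v : Fin N → ZMod 2) :
    haarG (restrictFin N ⁻¹' {v}) = haarG (IN N) := by
  let e : G := fun j => if h : j < N then v ⟨j, h⟩ else 0
  have he : restrictFin N e = v := funext fun i => by simp [restrictFin, e]
  rw [IN_eq_preimage_restrictFin, ← measure_preimage_add haarG (-e)]
  congr 1
  ext t
  simp [restrictFin, ← he, funext_iff]

lemma haarG_IN (N : ℕ) : haarG (IN N) = (2 ^ N)⁻¹ := by
  have hfib : ∀ v, MeasurableSet (restrictFin N ⁻¹' {v}) := fun v =>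
    (isClosed_singleton.preimage (show Continuous (restrictFin N) from
      continuous_pi fun i => continuous_apply _)).measurableSet
  have h := sum_measure_preimage_singleton (μ := haarG) univ fun v _ => hfib v
  simp only [haarG_preimage_restrictFin, sum_const, card_univ, coe_univ, Set.preimage_univ,
    measure_univ, Fintype.card_fun, ZMod.card, Fintype.card_fin, nsmul_eq_mul] at h
  push_cast at h
  exact ENNReal.eq_inv_of_mul_eq_one_left (by rwa [mul_comm])

lemma haarG_real_IN (N : ℕ) : haarG.real (IN N) = (2 ^ N)⁻¹ := by
  simp [measureReal_def, haarG_IN]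

/-- **Fejér kernel integral estimate (double spike case).** There is an absolute constant `c`
such that for `0 ≤ k < l ≤ N−1`, `x ∈ I_N(e_k + e_l)` (i.e. `x_k = x_l = 1`, `x_j = 0` for
all other `j < N`), and all `n ≥ 2^N`:
`∫_{I_N} |K_n(x − t)| dμ(t) ≤ c · 2^l · 2^k / (n · 2^N)`. -/
theorem fejer_integral_estimate_double :
    ∃ c : ℝ, 0 < c ∧ ∀ (N n k l : ℕ) (x : G), k < l → l ≤ N - 1 → 2 ^ N ≤ n →
      x k = 1 → x l = 1 → (∀ j < N, j ≠ k → j ≠ l → x j = 0) →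
      ∫ t in IN N, |fejer n (x - t)| ∂haarG ≤ c * 2 ^ l * 2 ^ k / ((n : ℝ) * 2 ^ N) := by
  refine ⟨4, by norm_num, fun N n k l x hkl hlN _ hxk hxl _ => ?_⟩
  have hbound : ∀ t ∈ IN N, ‖|fejer n (x - t)|‖ ≤ 2 ^ (l + 1) * 2 ^ (k + 1) / n := fun t ht => by
    rw [Real.norm_eq_abs, abs_abs]
    exact abs_fejer_le hkl (by simp [ht k (by omega), hxk]) (by simp [ht l (by omega), hxl]) n
  calc ∫ t in IN N, |fejer n (x - t)| ∂haarG
      ≤ ‖∫ t in IN N, |fejer n (x - t)| ∂haarG‖ := Real.le_norm_self _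
    _ ≤ 2 ^ (l + 1) * 2 ^ (k + 1) / n * haarG.real (IN N) :=
        norm_setIntegral_le_of_norm_le_const (measure_lt_top _ _) hbound
    _ = 4 * 2 ^ l * 2 ^ k / ((n : ℝ) * 2 ^ N) := by
        rw [haarG_real_IN]; ring
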